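/- Let n be an even positive integer and F : 𝔽_2^n → 𝔽_2^n a plateaued APN function. Then (2^{n+1} − 2)/3 ≤ Nb_F ≤ 2^{n+1} − 2. The lower bound holds with equality if and only if exactly 2(2^n − 1)/3 of the nonzero components of F are bent and exactly (2^n − 1)/3 of them are balanced. The upper bound holds with equality if and only if no nonzero component of F is balanced (i.e., W_F(b,0) ≠ 0 for all b ≠ 0). -/

import Mathlib

open Finset

/-- The integer-valued Walsh transform of `F : 𝔽_2^n → 𝔽_2^n`:
`W_F(b,a) = ∑_x (-1)^{⟨b,F(x)⟩ + ⟨a,x⟩}`. -/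
def walshB (n : ℕ) (F : (Fin n → ZMod 2) → (Fin n → ZMod 2))
    (b a : Fin n → ZMod 2) : ℤ :=
  ∑ x : Fin n → ZMod 2, (-1 : ℤ) ^ ((∑ i, b i * F x i).val + (∑ i, a i * x i).val)

/-- The imbalance `Nb_F = 2^{-n} ∑_{b ≠ 0} W_F(b,0)²`. -/
noncomputable def NbB (n : ℕ) (F : (Fin n → ZMod 2) → (Fin n → ZMod 2)) : ℝ :=
  ((2 : ℝ) ^ n)⁻¹ *
    ∑ b ∈ univ.filter (fun b : Fin n → ZMod 2 => b ≠ 0), ((walshB n F b 0 : ℝ)) ^ 2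

/-- `F` is APN: for every `a ≠ 0` and every `b`, the equation `F(x+a) + F(x) = b` has at
most 2 solutions. -/
def IsAPNB (n : ℕ) (F : (Fin n → ZMod 2) → (Fin n → ZMod 2)) : Prop :=
  ∀ a : Fin n → ZMod 2, a ≠ 0 → ∀ b : Fin n → ZMod 2,
    (univ.filter fun x => F (x + a) + F x = b).card ≤ 2

/-- The component `F_b` is `t`-plateaued: `|W_F(b,a)| ∈ {0, 2^{(n+t)/2}}` for all `a`,
expressed via squares of the integer Walsh coefficients. -/
def IsTPlateauedB (n : ℕ) (F : (Fin n → ZMod 2) → (Fin n → ZMod 2))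
    (b : Fin n → ZMod 2) (t : ℕ) : Prop :=
  ∀ a : Fin n → ZMod 2, walshB n F b a = 0 ∨ (walshB n F b a) ^ 2 = 2 ^ (n + t)

/-- `F` is plateaued: every nonzero component is `t_b`-plateaued for some `t_b`. -/
def IsPlateauedB (n : ℕ) (F : (Fin n → ZMod 2) → (Fin n → ZMod 2)) : Prop :=
  ∀ b : Fin n → ZMod 2, b ≠ 0 → ∃ t : ℕ, IsTPlateauedB n F b t

/-- The component `F_b` is bent: `|W_F(b,a)| = 2^{n/2}` for all `a`, i.e.
`W_F(b,a)² = 2^n`. -/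
def IsBentB (n : ℕ) (F : (Fin n → ZMod 2) → (Fin n → ZMod 2))
    (b : Fin n → ZMod 2) : Prop :=
  ∀ a : Fin n → ZMod 2, (walshB n F b a) ^ 2 = 2 ^ n

instance (n : ℕ) (F : (Fin n → ZMod 2) → (Fin n → ZMod 2)) (b : Fin n → ZMod 2) :
    Decidable (IsBentB n F b) := by
  unfold IsBentB; infer_instance

/-!
Summing the fourth powers of the whole Walsh spectrum counts, up to the factor `2^{2n}`, the
quadruples with `x + y + z + w = 0` and `F x + F y + F z + F w = 0`. Grouping them by `a = x + y`
turns this into `∑_a #{(x, z) | D_a F x = D_a F z}`; for APN `F` every fibre of `D_a F` (`a ≠ 0`)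
has size `0` or `2`, so the count is `3·2^{2n} - 2^{n+1}`. By Parseval a `t`-plateaued component has
fourth moment `2^{3n+t}`, hence `∑_{b ≠ 0} 2^{t_b} = 2^{n+1} - 2`.

Each `W_F(b,0)²` is `0` or `2^{n+t_b}`, which gives the upper bound and its equality case. For even
`n` every `t_b` is even, so a non-bent component (`t_b ≠ 0`) has `2^{t_b} ≥ 4`; this forces at least
`(2^{n+1} - 2)/3` bent components, each contributing `1` to `Nb_F`, and equality means exactly that
many bent components with all the others balanced.
-/

open Matrix

theorem AddChar.map_sum_eq_prod {ι A M : Type*} [AddCommMonoid A] [CommMonoid M]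
    (ψ : AddChar A M) (s : Finset ι) (f : ι → A) :
    ψ (∑ i ∈ s, f i) = ∏ i ∈ s, ψ (f i) := by
  classical
  induction s using Finset.induction_on with
  | empty => simp
  | insert i s hi ih => rw [sum_insert hi, prod_insert hi, map_add_eq_mul, ih]

theorem card_pairs_eq_sum_sq_card_fiber {α β : Type*} [Fintype α] [Fintype β] [DecidableEq β]
    (f : α → β) : #{xz : α × α | f xz.1 = f xz.2} = ∑ c, #{x | f x = c} ^ 2 := by
  rw [card_eq_sum_card_fiberwise (f := fun xz => f xz.1) (t := univ) fun _ _ => mem_univ _]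
  refine sum_congr rfl fun c _ => ?_
  rw [sq, ← card_product, filter_filter]
  congr 1
  ext ⟨x, z⟩
  simp only [mem_filter, mem_univ, true_and, mem_product]
  constructor
  · rintro ⟨hxz, rfl⟩; exact ⟨rfl, hxz.symm⟩
  · rintro ⟨rfl, hz⟩; exact ⟨hz.symm, rfl⟩

theorem even_of_sq_eq_two_pow {k : ℤ} {m : ℕ} (h : k ^ 2 = 2 ^ m) : Even m := by
  have h' : k.natAbs ^ 2 = 2 ^ m := by simpa using congrArg Int.natAbs h
  have := congrArg (fun x => x.factorization 2) h'
  simp only [Nat.factorization_pow, Finsupp.coe_smul, Pi.smul_apply, smul_eq_mul,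
    Nat.prime_two.factorization_self, mul_one] at this
  exact ⟨_, this.symm.trans (two_mul _)⟩

section PiZModTwo

variable {ι : Type*}

theorem pi_zmod_two_add_self (x : ι → ZMod 2) : x + x = 0 :=
  funext fun i => CharTwo.add_self_eq_zero (x i)

theorem pi_zmod_two_add_add_cancel_left (x y : ι → ZMod 2) : x + (x + y) = y := by
  rw [← add_assoc, pi_zmod_two_add_self, zero_add]

theorem pi_zmod_two_add_eq_zero_iff {x y : ι → ZMod 2} : x + y = 0 ↔ x = y := by
  rw [add_eq_zero_iff_eq_neg, neg_eq_of_add_eq_zero_right (pi_zmod_two_add_self y)]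

end PiZModTwo

def signChar : AddChar (ZMod 2) ℤ where
  toFun c := (-1) ^ c.val
  map_zero_eq_one' := rfl
  map_add_eq_mul' := by decide

section Walsh

variable {n : ℕ}

local notation "𝔽₂ⁿ" => Fin n → ZMod 2

theorem sum_signChar_dotProduct (y : 𝔽₂ⁿ) :
    ∑ a : 𝔽₂ⁿ, signChar (a ⬝ᵥ y) = if y = 0 then 2 ^ n else 0 := by
  classical
  let ψ : AddChar 𝔽₂ⁿ ℤ :=
    signChar.compAddMonoidHom (AddMonoidHom.mk' (· ⬝ᵥ y) fun a b => add_dotProduct a b y)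
  have hψ : ψ = 0 ↔ y = 0 := by
    refine ⟨fun h => funext fun j => ?_, fun h => ?_⟩
    · have hj : signChar (y j) = 1 := by
        simpa [ψ, single_dotProduct] using DFunLike.congr_fun h (Pi.single j 1)
      have key : ∀ c : ZMod 2, signChar c = 1 → c = 0 := by decide
      exact key _ hj
    · ext a; simp [ψ, h]
  simpa [ψ, hψ, card_univ] using ψ.sum_eq_ite

theorem walshB_eq_sum_signChar (F : 𝔽₂ⁿ → 𝔽₂ⁿ) (b a : 𝔽₂ⁿ) :
    walshB n F b a = ∑ x, signChar (b ⬝ᵥ F x) * signChar (a ⬝ᵥ x) :=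
  sum_congr rfl fun _ _ => pow_add _ _ _

theorem sum_walshB_pow (F : 𝔽₂ⁿ → 𝔽₂ⁿ) (b : 𝔽₂ⁿ) (k : ℕ) :
    ∑ a, walshB n F b a ^ k =
      2 ^ n * ∑ p : Fin k → 𝔽₂ⁿ with ∑ i, p i = 0, signChar (b ⬝ᵥ ∑ i, F (p i)) := by
  have hpow : ∀ a, walshB n F b a ^ k = ∑ p : Fin k → 𝔽₂ⁿ,
      signChar (b ⬝ᵥ ∑ i, F (p i)) * signChar (a ⬝ᵥ ∑ i, p i) := fun a => by
    simp only [walshB_eq_sum_signChar, Fintype.sum_pow, prod_mul_distrib, dotProduct_sum,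
      AddChar.map_sum_eq_prod]
  calc ∑ a, walshB n F b a ^ k
      = ∑ p : Fin k → 𝔽₂ⁿ, signChar (b ⬝ᵥ ∑ i, F (p i)) * ∑ a, signChar (a ⬝ᵥ ∑ i, p i) := by
        simp only [hpow, mul_sum]; exact sum_comm
    _ = _ := by
        simp only [sum_signChar_dotProduct, sum_filter, mul_sum, mul_ite, mul_zero]
        exact sum_congr rfl fun p _ => by rw [mul_comm]

theorem sum_walshB_sq (F : 𝔽₂ⁿ → 𝔽₂ⁿ) (b : 𝔽₂ⁿ) :
    ∑ a, walshB n F b a ^ 2 = 2 ^ (2 * n) := by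
  have hdiag : ∀ p : Fin 2 → 𝔽₂ⁿ, ∑ i, p i = 0 ↔ p 0 = p 1 := fun p => by
    rw [Fin.sum_univ_two, pi_zmod_two_add_eq_zero_iff]
  have hcard : #{p : Fin 2 → 𝔽₂ⁿ | ∑ i, p i = 0} = 2 ^ n := by
    simp only [hdiag]
    refine (card_nbij' (· 0) (fun x => ![x, x]) (by simp) (by simp) (fun p hp => ?_)
      fun _ _ => rfl).trans (card_univ.trans (by simp))
    funext i
    fin_cases i <;> simp [(mem_filter.1 hp).2]
  rw [sum_walshB_pow, sum_congr rfl fun p hp => by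
    rw [Fin.sum_univ_two, ← (hdiag p).1 (mem_filter.1 hp).2, pi_zmod_two_add_self, dotProduct_zero,
      AddChar.map_zero_eq_one], sum_const, hcard, two_mul, pow_add]
  simp

theorem sum_sum_walshB_pow (F : 𝔽₂ⁿ → 𝔽₂ⁿ) (k : ℕ) :
    ∑ b, ∑ a, walshB n F b a ^ k =
      2 ^ (2 * n) * #{p : Fin k → 𝔽₂ⁿ | ∑ i, p i = 0 ∧ ∑ i, F (p i) = 0} := by
  simp only [sum_walshB_pow, ← mul_sum]
  rw [sum_comm]
  simp only [sum_signChar_dotProduct, ← sum_filter, filter_filter, sum_const, nsmul_eq_mul]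
  ring

theorem exists_walshB_ne_zero (F : 𝔽₂ⁿ → 𝔽₂ⁿ) (b : 𝔽₂ⁿ) : ∃ a, walshB n F b a ≠ 0 := by
  by_contra! h
  have := sum_walshB_sq F b
  simp only [h, ne_eq, OfNat.ofNat_ne_zero, not_false_eq_true, zero_pow, sum_const_zero] at this
  exact absurd this.symm (by positivity)

theorem walshB_zero_left (F : 𝔽₂ⁿ → 𝔽₂ⁿ) (a : 𝔽₂ⁿ) :
    walshB n F 0 a = if a = 0 then 2 ^ n else 0 := by
  simp only [walshB_eq_sum_signChar, zero_dotProduct, AddChar.map_zero_eq_one, one_mul,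
    dotProduct_comm a, sum_signChar_dotProduct]

theorem isTPlateauedB_zero (F : 𝔽₂ⁿ → 𝔽₂ⁿ) : IsTPlateauedB n F 0 n := fun a => by
  rw [walshB_zero_left]
  split_ifs
  · exact Or.inr (by rw [← pow_mul, ← two_mul, mul_comm])
  · exact Or.inl rfl

namespace IsTPlateauedB

variable {F : (Fin n → ZMod 2) → Fin n → ZMod 2} {b : Fin n → ZMod 2} {t : ℕ}

theorem walshB_sq_le (h : IsTPlateauedB n F b t) (a : 𝔽₂ⁿ) :
    walshB n F b a ^ 2 ≤ 2 ^ (n + t) :=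
  (h a).elim (fun h0 => by rw [h0]; positivity) le_of_eq

theorem walshB_sq_eq_iff (h : IsTPlateauedB n F b t) (a : 𝔽₂ⁿ) :
    walshB n F b a ^ 2 = 2 ^ (n + t) ↔ walshB n F b a ≠ 0 := by
  refine ⟨fun hsq h0 => ?_, (h a).resolve_left⟩
  rw [h0] at hsq
  exact absurd hsq.symm (by positivity)

theorem even_add (h : IsTPlateauedB n F b t) : Even (n + t) := by
  obtain ⟨a, ha⟩ := exists_walshB_ne_zero F b
  exact even_of_sq_eq_two_pow ((h a).resolve_left ha)

theorem isBentB_iff (h : IsTPlateauedB n F b t) : IsBentB n F b ↔ t = 0 := by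
  constructor
  · intro hbent
    obtain ⟨a, ha⟩ := exists_walshB_ne_zero F b
    have := (hbent a).symm.trans ((h a).resolve_left ha)
    simpa using (pow_right_injective₀ (two_pos (α := ℤ)) (by norm_num) this)
  · rintro rfl a
    have hsum : ∑ a, walshB n F b a ^ 2 = ∑ _a : 𝔽₂ⁿ, (2 : ℤ) ^ n := by
      simp [sum_walshB_sq, two_mul, pow_add]
    exact (sum_eq_sum_iff_of_le fun a _ => h.walshB_sq_le a).1 hsum a (mem_univ a)

theorem sum_walshB_pow_four (h : IsTPlateauedB n F b t) :
    ∑ a, walshB n F b a ^ 4 = 2 ^ (n + t) * 2 ^ (2 * n) := by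
  rw [← sum_walshB_sq F b, mul_sum]
  refine sum_congr rfl fun a _ => ?_
  rcases h a with h0 | hsq
  · simp [h0]
  · rw [← hsq]; ring

end IsTPlateauedB

theorem card_quadruples_eq_sum_card_pairs (F : 𝔽₂ⁿ → 𝔽₂ⁿ) :
    #{p : Fin 4 → 𝔽₂ⁿ | ∑ i, p i = 0 ∧ ∑ i, F (p i) = 0} =
      ∑ a, #{xz : 𝔽₂ⁿ × 𝔽₂ⁿ | F (xz.1 + a) + F xz.1 = F (xz.2 + a) + F xz.2} := by
  rw [card_eq_sum_card_fiberwise (f := fun p : Fin 4 → 𝔽₂ⁿ => p 0 + p 1) (t := univ)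
    fun _ _ => mem_univ _]
  refine sum_congr rfl fun a _ => ?_
  have hsum : ∀ p : Fin 4 → 𝔽₂ⁿ, ∑ i, p i = p 0 + p 1 + (p 2 + p 3) := fun p => by
    rw [Fin.sum_univ_four, add_assoc (p 0 + p 1)]
  have hsumF : ∀ p : Fin 4 → 𝔽₂ⁿ, ∑ i, F (p i) = 0 ↔ F (p 1) + F (p 0) = F (p 3) + F (p 2) :=
    fun p => by rw [Fin.sum_univ_four, add_assoc, pi_zmod_two_add_eq_zero_iff, add_comm (F (p 0)),
      add_comm (F (p 2))]
  -- a quadruple in the fibre over `a` is `(x, x + a, z, z + a)`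
  have hfib : ∀ p : Fin 4 → 𝔽₂ⁿ,
      (∑ i, p i = 0 ∧ p 0 + p 1 = a) ↔ p 1 = p 0 + a ∧ p 3 = p 2 + a := fun p => by
    rw [hsum]
    constructor
    · rintro ⟨h, rfl⟩
      have h23 := pi_zmod_two_add_eq_zero_iff.1 h
      exact ⟨(pi_zmod_two_add_add_cancel_left _ _).symm,
        by rw [h23, pi_zmod_two_add_add_cancel_left]⟩
    · rintro ⟨h1, h3⟩
      rw [h1, h3, pi_zmod_two_add_add_cancel_left, pi_zmod_two_add_add_cancel_left]
      exact ⟨pi_zmod_two_add_self a, rfl⟩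
  refine card_nbij' (fun p => (p 0, p 2)) (fun xz => ![xz.1, xz.1 + a, xz.2, xz.2 + a])
    (fun p hp => ?_) (fun xz hxz => ?_) (fun p hp => ?_) fun _ _ => rfl
  · simp only [coe_filter, mem_filter, mem_univ, true_and, Set.mem_ofPred_eq] at hp ⊢
    obtain ⟨h1, h3⟩ := (hfib p).1 ⟨hp.1.1, hp.2⟩
    rw [← h1, ← h3]
    exact (hsumF p).1 hp.1.2
  · simp only [coe_filter, mem_filter, mem_univ, true_and, Set.mem_ofPred_eq] at hxz ⊢
    obtain ⟨h0, h1⟩ := (hfib ![xz.1, xz.1 + a, xz.2, xz.2 + a]).2 ⟨rfl, rfl⟩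
    exact ⟨⟨h0, (hsumF _).2 hxz⟩, h1⟩
  · simp only [coe_filter, mem_filter, mem_univ, true_and, Set.mem_ofPred_eq] at hp
    obtain ⟨h1, h3⟩ := (hfib p).1 ⟨hp.1.1, hp.2⟩
    funext i
    fin_cases i <;> simp [h1, h3]

theorem IsAPNB.card_pairs_derivative_eq {F : 𝔽₂ⁿ → 𝔽₂ⁿ} (hapn : IsAPNB n F) {a : 𝔽₂ⁿ}
    (ha : a ≠ 0) :
    #{xz : 𝔽₂ⁿ × 𝔽₂ⁿ | F (xz.1 + a) + F xz.1 = F (xz.2 + a) + F xz.2} = 2 ^ (n + 1) := by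
  -- the fibres of `x ↦ F (x + a) + F x` are unions of cosets of `{0, a}`
  have hfibre : ∀ c, #{x | F (x + a) + F x = c} ≠ 1 := fun c h => by
    obtain ⟨x, hx⟩ := card_eq_one.1 h
    have hmem : ∀ y, y ∈ ({x} : Finset 𝔽₂ⁿ) ↔ F (y + a) + F y = c := fun y => by simp [← hx]
    have hxa := (hmem (x + a)).2 <| by
      rw [add_assoc, pi_zmod_two_add_self, add_zero, add_comm, (hmem x).1 (mem_singleton_self x)]
    exact ha (by simpa using mem_singleton.1 hxa)
  have hsq : ∀ c, #{x | F (x + a) + F x = c} ^ 2 = 2 * #{x | F (x + a) + F x = c} := fun c => by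
    have hle := hapn a ha c
    have hne_one := hfibre c
    interval_cases #{x | F (x + a) + F x = c} <;> simp_all
  rw [card_pairs_eq_sum_sq_card_fiber (fun x => F (x + a) + F x), sum_congr rfl fun c _ => hsq c,
    ← mul_sum, ← card_eq_sum_card_fiberwise fun _ _ => mem_univ _, card_univ]
  simp [pow_succ, mul_comm]

theorem IsAPNB.card_quadruples {F : 𝔽₂ⁿ → 𝔽₂ⁿ} (hapn : IsAPNB n F) :
    (#{p : Fin 4 → 𝔽₂ⁿ | ∑ i, p i = 0 ∧ ∑ i, F (p i) = 0} : ℤ) =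
      3 * 2 ^ (2 * n) - 2 ^ (n + 1) := by
  have hzero :
      #{xz : 𝔽₂ⁿ × 𝔽₂ⁿ | F (xz.1 + 0) + F xz.1 = F (xz.2 + 0) + F xz.2} = 2 ^ n * 2 ^ n := by
    simp [pi_zmod_two_add_self]
  rw [card_quadruples_eq_sum_card_pairs, ← add_sum_erase _ _ (mem_univ 0), hzero,
    sum_congr rfl fun a ha => hapn.card_pairs_derivative_eq (ne_of_mem_erase ha), sum_const,
    card_erase_of_mem (mem_univ _), card_univ, Fintype.card_fun, ZMod.card, Fintype.card_fin,
    smul_eq_mul]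
  push_cast [Nat.one_le_two_pow]
  ring

theorem IsAPNB.sum_two_pow_eq_of_isTPlateauedB {F : 𝔽₂ⁿ → 𝔽₂ⁿ} {t : 𝔽₂ⁿ → ℕ} (hapn : IsAPNB n F)
    (ht : ∀ b ≠ 0, IsTPlateauedB n F b (t b)) :
    ∑ b : 𝔽₂ⁿ with b ≠ 0, (2 : ℤ) ^ t b = 2 ^ (n + 1) - 2 := by
  have htotal := sum_sum_walshB_pow F 4
  rw [hapn.card_quadruples, ← add_sum_erase _ _ (mem_univ 0),
    (isTPlateauedB_zero F).sum_walshB_pow_four,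
    sum_congr rfl fun b hb => (ht b (ne_of_mem_erase hb)).sum_walshB_pow_four] at htotal
  have hfactor : ∑ b ∈ univ.erase (0 : 𝔽₂ⁿ), (2 : ℤ) ^ (n + t b) * 2 ^ (2 * n) =
      2 ^ (3 * n) * ∑ b ∈ univ.erase (0 : 𝔽₂ⁿ), (2 : ℤ) ^ t b := by
    rw [mul_sum]; exact sum_congr rfl fun b _ => by ring
  rw [filter_ne']
  refine mul_left_cancel₀ (pow_ne_zero (3 * n) two_ne_zero) ?_
  rw [hfactor] at htotal
  linear_combination htotal

theorem IsAPNB.sum_two_pow_add_eq_of_isTPlateauedB {F : 𝔽₂ⁿ → 𝔽₂ⁿ} {t : 𝔽₂ⁿ → ℕ} (hapn : IsAPNB n F)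
    (ht : ∀ b ≠ 0, IsTPlateauedB n F b (t b)) :
    ∑ b : 𝔽₂ⁿ with b ≠ 0, (2 : ℤ) ^ (n + t b) = (2 ^ (n + 1) - 2) * 2 ^ n := by
  simp only [pow_add, ← mul_sum, hapn.sum_two_pow_eq_of_isTPlateauedB ht, mul_comm]

theorem sum_walshB_zero_sq_le {F : 𝔽₂ⁿ → 𝔽₂ⁿ} {t : 𝔽₂ⁿ → ℕ} (hapn : IsAPNB n F)
    (ht : ∀ b ≠ 0, IsTPlateauedB n F b (t b)) :
    ∑ b : 𝔽₂ⁿ with b ≠ 0, walshB n F b 0 ^ 2 ≤ (2 ^ (n + 1) - 2) * 2 ^ n :=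
  hapn.sum_two_pow_add_eq_of_isTPlateauedB ht ▸
    sum_le_sum fun b hb => (ht b (mem_filter.1 hb).2).walshB_sq_le 0

theorem sum_walshB_zero_sq_eq_iff {F : 𝔽₂ⁿ → 𝔽₂ⁿ} {t : 𝔽₂ⁿ → ℕ} (hapn : IsAPNB n F)
    (ht : ∀ b ≠ 0, IsTPlateauedB n F b (t b)) :
    ∑ b : 𝔽₂ⁿ with b ≠ 0, walshB n F b 0 ^ 2 = (2 ^ (n + 1) - 2) * 2 ^ n ↔
      ∀ b ≠ 0, walshB n F b 0 ≠ 0 := by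
  rw [← hapn.sum_two_pow_add_eq_of_isTPlateauedB ht,
    sum_eq_sum_iff_of_le fun b hb => (ht b (mem_filter.1 hb).2).walshB_sq_le 0]
  simp only [mem_filter, mem_univ, true_and]
  exact forall₂_congr fun b hb => (ht b hb).walshB_sq_eq_iff 0

theorem card_filter_ne_zero : #{b : 𝔽₂ⁿ | b ≠ 0} = 2 ^ n - 1 := by
  rw [filter_ne', card_erase_of_mem (mem_univ _), card_univ, Fintype.card_fun, ZMod.card,
    Fintype.card_fin]

theorem IsTPlateauedB.two_le_of_not_isBentB {F : 𝔽₂ⁿ → 𝔽₂ⁿ} {b : 𝔽₂ⁿ} {t : ℕ}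
    (h : IsTPlateauedB n F b t) (hne : Even n) (hb : ¬IsBentB n F b) : 2 ≤ t := by
  obtain ⟨k, rfl⟩ := (Nat.even_add.1 h.even_add).1 hne
  have : k + k ≠ 0 := mt h.isBentB_iff.2 hb
  omega

theorem le_three_mul_card_bent {F : 𝔽₂ⁿ → 𝔽₂ⁿ} {t : 𝔽₂ⁿ → ℕ} (hne : Even n)
    (hapn : IsAPNB n F) (ht : ∀ b ≠ 0, IsTPlateauedB n F b (t b)) :
    (2 : ℤ) ^ (n + 1) - 2 ≤ 3 * #{b : 𝔽₂ⁿ | b ≠ 0 ∧ IsBentB n F b} := by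
  have hsplit :=
    sum_filter_add_sum_filter_not {b : 𝔽₂ⁿ | b ≠ 0} (IsBentB n F) fun b => (2 : ℤ) ^ t b
  have hcard := card_filter_add_card_filter_not (s := {b : 𝔽₂ⁿ | b ≠ 0}) (IsBentB n F)
  rw [hapn.sum_two_pow_eq_of_isTPlateauedB ht, filter_filter, filter_filter] at hsplit
  rw [card_filter_ne_zero, filter_filter, filter_filter] at hcard
  have hbent : ∑ b : 𝔽₂ⁿ with b ≠ 0 ∧ IsBentB n F b, (2 : ℤ) ^ t b =
      #{b : 𝔽₂ⁿ | b ≠ 0 ∧ IsBentB n F b} := by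
    rw [card_eq_sum_ones, Nat.cast_sum]
    refine sum_congr rfl fun b hb => ?_
    obtain ⟨hb0, hbent⟩ := (mem_filter.1 hb).2
    rw [(ht b hb0).isBentB_iff.1 hbent, pow_zero, Nat.cast_one]
  have hnonbent : 4 * (#{b : 𝔽₂ⁿ | b ≠ 0 ∧ ¬IsBentB n F b} : ℤ) ≤
      ∑ b : 𝔽₂ⁿ with b ≠ 0 ∧ ¬IsBentB n F b, (2 : ℤ) ^ t b := by
    rw [mul_comm, ← nsmul_eq_mul]
    refine card_nsmul_le_sum _ _ _ fun b hb => ?_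
    obtain ⟨hb0, hbent⟩ := (mem_filter.1 hb).2
    exact le_trans (by norm_num)
      (pow_le_pow_right₀ one_le_two ((ht b hb0).two_le_of_not_isBentB hne hbent))
  zify [Nat.one_le_two_pow] at hcard
  rw [hbent] at hsplit
  linarith [pow_succ (2 : ℤ) n]

theorem sum_walshB_zero_sq_eq_card_bent_add (F : 𝔽₂ⁿ → 𝔽₂ⁿ) :
    ∑ b : 𝔽₂ⁿ with b ≠ 0, walshB n F b 0 ^ 2 =
      2 ^ n * #{b : 𝔽₂ⁿ | b ≠ 0 ∧ IsBentB n F b} +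
        ∑ b : 𝔽₂ⁿ with b ≠ 0 ∧ ¬IsBentB n F b, walshB n F b 0 ^ 2 := by
  rw [← sum_filter_add_sum_filter_not {b : 𝔽₂ⁿ | b ≠ 0} (IsBentB n F), filter_filter,
    filter_filter, sum_congr rfl fun b hb => (mem_filter.1 hb).2.2 0, sum_const, nsmul_eq_mul,
    mul_comm]

theorem le_three_mul_sum_walshB_zero_sq {F : 𝔽₂ⁿ → 𝔽₂ⁿ} {t : 𝔽₂ⁿ → ℕ} (hne : Even n)
    (hapn : IsAPNB n F) (ht : ∀ b ≠ 0, IsTPlateauedB n F b (t b)) :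
    (2 ^ (n + 1) - 2) * 2 ^ n ≤ (∑ b : 𝔽₂ⁿ with b ≠ 0, walshB n F b 0 ^ 2) * 3 := by
  have hbent_le := mul_le_mul_of_nonneg_right (le_three_mul_card_bent hne hapn ht)
    (by positivity : (0 : ℤ) ≤ 2 ^ n)
  have hrest : 0 ≤ ∑ b : 𝔽₂ⁿ with b ≠ 0 ∧ ¬IsBentB n F b, walshB n F b 0 ^ 2 :=
    sum_nonneg fun _ _ => sq_nonneg _
  rw [sum_walshB_zero_sq_eq_card_bent_add]
  linarith

theorem three_dvd_two_pow_sub_one (hne : Even n) : 3 ∣ 2 ^ n - 1 := by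
  simpa using Nat.pow_sub_one_dvd_pow_sub_one 2 hne.two_dvd

theorem sum_walshB_zero_sq_mul_three_eq_iff {F : 𝔽₂ⁿ → 𝔽₂ⁿ} {t : 𝔽₂ⁿ → ℕ} (hne : Even n)
    (hapn : IsAPNB n F) (ht : ∀ b ≠ 0, IsTPlateauedB n F b (t b)) :
    (∑ b : 𝔽₂ⁿ with b ≠ 0, walshB n F b 0 ^ 2) * 3 = (2 ^ (n + 1) - 2) * 2 ^ n ↔
      3 * (#{b : 𝔽₂ⁿ | b ≠ 0 ∧ IsBentB n F b} : ℤ) = 2 ^ (n + 1) - 2 ∧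
        ∀ b ≠ 0, ¬IsBentB n F b → walshB n F b 0 = 0 := by
  have hbent_le := mul_le_mul_of_nonneg_right (le_three_mul_card_bent hne hapn ht)
    (by positivity : (0 : ℤ) ≤ 2 ^ n)
  have hrest : 0 ≤ ∑ b : 𝔽₂ⁿ with b ≠ 0 ∧ ¬IsBentB n F b, walshB n F b 0 ^ 2 :=
    sum_nonneg fun _ _ => sq_nonneg _
  have hrest_eq_zero : ∑ b : 𝔽₂ⁿ with b ≠ 0 ∧ ¬IsBentB n F b, walshB n F b 0 ^ 2 = 0 ↔
      ∀ b ≠ 0, ¬IsBentB n F b → walshB n F b 0 = 0 := by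
    simp only [sum_eq_zero_iff_of_nonneg fun _ _ => sq_nonneg _, mem_filter, mem_univ, true_and,
      pow_eq_zero_iff two_ne_zero, and_imp]
  rw [sum_walshB_zero_sq_eq_card_bent_add, ← hrest_eq_zero]
  constructor
  · intro h
    have hzero : ∑ b : 𝔽₂ⁿ with b ≠ 0 ∧ ¬IsBentB n F b, walshB n F b 0 ^ 2 = 0 := by linarith
    refine ⟨mul_right_cancel₀ (pow_ne_zero n two_ne_zero : (2 : ℤ) ^ n ≠ 0) ?_, hzero⟩
    linarith
  · rintro ⟨hcard, hzero⟩
    rw [hzero, ← hcard]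
    ring

theorem card_bent_card_balanced_eq_iff (hne : Even n) (F : 𝔽₂ⁿ → 𝔽₂ⁿ) :
    (3 * (#{b : 𝔽₂ⁿ | b ≠ 0 ∧ IsBentB n F b} : ℤ) = 2 ^ (n + 1) - 2 ∧
        ∀ b ≠ 0, ¬IsBentB n F b → walshB n F b 0 = 0) ↔
      #{b : 𝔽₂ⁿ | b ≠ 0 ∧ IsBentB n F b} = 2 * (2 ^ n - 1) / 3 ∧
        #{b : 𝔽₂ⁿ | b ≠ 0 ∧ walshB n F b 0 = 0} = (2 ^ n - 1) / 3 := by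
  have hbalanced : ({b | b ≠ 0 ∧ walshB n F b 0 = 0} : Finset 𝔽₂ⁿ) ⊆
      ({b | b ≠ 0 ∧ ¬IsBentB n F b} : Finset 𝔽₂ⁿ) :=
    fun b hb => by
      simp only [mem_filter, mem_univ, true_and] at hb ⊢
      exact ⟨hb.1, fun hbent => (pow_pos (two_pos (α := ℤ)) n).ne (by simpa [hb.2] using hbent 0)⟩
  have hcard := card_filter_add_card_filter_not (s := {b : 𝔽₂ⁿ | b ≠ 0}) (IsBentB n F)
  rw [card_filter_ne_zero, filter_filter, filter_filter] at hcard
  have hsubset : (∀ b ≠ 0, ¬IsBentB n F b → walshB n F b 0 = 0) ↔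
      #{b : 𝔽₂ⁿ | b ≠ 0 ∧ ¬IsBentB n F b} ≤ #{b : 𝔽₂ⁿ | b ≠ 0 ∧ walshB n F b 0 = 0} := by
    rw [eq_iff_card_le_of_subset hbalanced]
    refine ⟨fun h => hbalanced.antisymm fun b hb => ?_, fun h b hb hnb => ?_⟩
    · simp only [mem_filter, mem_univ, true_and] at hb ⊢
      exact ⟨hb.1, h b hb.1 hb.2⟩
    · have hmem : b ∈ ({b | b ≠ 0 ∧ ¬IsBentB n F b} : Finset 𝔽₂ⁿ) := by simp [hb, hnb]
      rw [← h, mem_filter] at hmem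
      exact hmem.2.2
  have hcast : 3 * (#{b : 𝔽₂ⁿ | b ≠ 0 ∧ IsBentB n F b} : ℤ) = 2 ^ (n + 1) - 2 ↔
      3 * #{b : 𝔽₂ⁿ | b ≠ 0 ∧ IsBentB n F b} = 2 * (2 ^ n - 1) := by
    rw [pow_succ]
    zify [Nat.one_le_two_pow]
    constructor <;> intro h <;> linarith
  have h3 := three_dvd_two_pow_sub_one hne
  have := card_le_card hbalanced
  rw [hsubset, hcast]
  omega

theorem NbB_eq_div (F : 𝔽₂ⁿ → 𝔽₂ⁿ) :
    NbB n F = ((∑ b : 𝔽₂ⁿ with b ≠ 0, walshB n F b 0 ^ 2 : ℤ) : ℝ) / 2 ^ n := by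
  rw [NbB, inv_mul_eq_div]
  push_cast
  rfl

end Walsh

theorem plateaued_apn_imbalance_bounds_general (n : ℕ) (hne : Even n)
    (F : (Fin n → ZMod 2) → (Fin n → ZMod 2))
    (hplat : IsPlateauedB n F) (hapn : IsAPNB n F) :
    (((2 : ℝ) ^ (n + 1) - 2) / 3 ≤ NbB n F ∧ NbB n F ≤ (2 : ℝ) ^ (n + 1) - 2) ∧
    (NbB n F = ((2 : ℝ) ^ (n + 1) - 2) / 3 ↔
      (univ.filter fun b : Fin n → ZMod 2 => b ≠ 0 ∧ IsBentB n F b).card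
          = 2 * (2 ^ n - 1) / 3 ∧
      (univ.filter fun b : Fin n → ZMod 2 => b ≠ 0 ∧ walshB n F b 0 = 0).card
          = (2 ^ n - 1) / 3) ∧
    (NbB n F = (2 : ℝ) ^ (n + 1) - 2 ↔
      ∀ b : Fin n → ZMod 2, b ≠ 0 → walshB n F b 0 ≠ 0) := by
  choose! t ht using hplat
  have h2n : (0 : ℝ) < 2 ^ n := by positivity
  rw [NbB_eq_div, div_le_div_iff₀ three_pos h2n, div_le_iff₀ h2n,
    div_eq_div_iff h2n.ne' three_ne_zero, div_eq_iff h2n.ne',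
    ← card_bent_card_balanced_eq_iff hne, ← sum_walshB_zero_sq_mul_three_eq_iff hne hapn ht,
    ← sum_walshB_zero_sq_eq_iff hapn ht]
  exact ⟨⟨by exact_mod_cast le_three_mul_sum_walshB_zero_sq hne hapn ht,
    by exact_mod_cast sum_walshB_zero_sq_le hapn ht⟩, by norm_cast, by norm_cast⟩

theorem plateaued_apn_imbalance_bounds (n : ℕ) (hn : 0 < n) (hne : Even n)
    (F : (Fin n → ZMod 2) → (Fin n → ZMod 2))
    (hplat : IsPlateauedB n F) (hapn : IsAPNB n F) :
    (((2 : ℝ) ^ (n + 1) - 2) / 3 ≤ NbB n F ∧ NbB n F ≤ (2 : ℝ) ^ (n + 1) - 2) ∧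
    (NbB n F = ((2 : ℝ) ^ (n + 1) - 2) / 3 ↔
      (univ.filter fun b : Fin n → ZMod 2 => b ≠ 0 ∧ IsBentB n F b).card
          = 2 * (2 ^ n - 1) / 3 ∧
      (univ.filter fun b : Fin n → ZMod 2 => b ≠ 0 ∧ walshB n F b 0 = 0).card
          = (2 ^ n - 1) / 3) ∧
    (NbB n F = (2 : ℝ) ^ (n + 1) - 2 ↔
      ∀ b : Fin n → ZMod 2, b ≠ 0 → walshB n F b 0 ≠ 0) :=
  plateaued_apn_imbalance_bounds_general n hne F hplat hapn
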